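/- arXiv:1509.00430 — 6 statements merged into one kernel-verified Lean document; each statement's English description precedes it below -/
import Mathlib

section
/- If there exists an integer Heffter array H(m,n), then mn ≡ 0 or 3 (mod 4). -/
lemma gauss_Icc_int (N : ℕ) : (∑ v ∈ Finset.Icc (1:ℤ) (N:ℤ), v) * 2 = N * (N+1) := by
  induction N with
  | zero => simp
  | succ k ih =>
    have h : Finset.Icc (1:ℤ) ((k:ℤ)+1) = insert ((k:ℤ)+1) (Finset.Icc (1:ℤ) (k:ℤ)) := by
      ext x
      simp only [Finset.mem_Icc, Finset.mem_insert]
      omega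
    push_cast
    rw [h, Finset.sum_insert (by simp), add_mul]
    push_cast at ih
    rw [ih]
    ring

/-- If there exists an integer Heffter array H(m,n), then mn ≡ 0 or 3 (mod 4). -/
theorem stmt_2 (m n : ℕ) (A : Fin m → Fin n → ℤ)
    (hrow : ∀ i, ∑ j, A i j = 0)
    (hcol : ∀ j, ∑ i, A i j = 0)
    (hsupp : ∀ v ∈ Finset.Icc (1 : ℤ) (m * n), ∃! p : Fin m × Fin n, |A p.1 p.2| = v) :
    m * n % 4 = 0 ∨ m * n % 4 = 3 := by
  classical
  set N : ℕ := m * n with hN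
  have hNcast : ((m : ℤ) * n) = (N : ℤ) := by push_cast [hN]; ring
  set S : Finset ℤ := Finset.Icc (1:ℤ) ((m:ℤ) * n) with hS
  choose f hf using fun v (hv : v ∈ S) => (hsupp v hv).exists
  have hcardS : S.card = N := by
    rw [hS, hNcast, Int.card_Icc]
    simp
  have hmaps : ∀ v hv, f v hv ∈ (Finset.univ : Finset (Fin m × Fin n)) := by
    intros; exact Finset.mem_univ _
  have hinj : ∀ a₁ ha₁ a₂ ha₂, f a₁ ha₁ = f a₂ ha₂ → a₁ = a₂ := by
    intro a₁ ha₁ a₂ ha₂ h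
    rw [← hf a₁ ha₁, ← hf a₂ ha₂, h]
  have hcard_le : (Finset.univ : Finset (Fin m × Fin n)).card ≤ S.card := by
    simp [hcardS, hN]
  have hsurj : ∀ p ∈ (Finset.univ : Finset (Fin m × Fin n)),
      ∃ a ha, p = f a ha :=
    Finset.surj_on_of_inj_on_of_card_le f hmaps (fun a₁ a₂ ha₁ ha₂ => hinj a₁ ha₁ a₂ ha₂) hcard_le
  have hsum : ∑ v ∈ S, v = ∑ p : Fin m × Fin n, |A p.1 p.2| := by
    refine Finset.sum_bij f hmaps hinj ?_ ?_
    · intro p hp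
      obtain ⟨a, ha, rfl⟩ := hsurj p hp
      exact ⟨a, ha, rfl⟩
    · intro a ha
      rw [hf a ha]
  -- total sum of entries is 0
  have htot : ∑ p : Fin m × Fin n, A p.1 p.2 = 0 := by
    rw [Fintype.sum_prod_type]
    simp [hrow]
  -- parity: sum of abs ≡ sum mod 2
  have hpar : ((∑ p : Fin m × Fin n, |A p.1 p.2| : ℤ) : ZMod 2) = 0 := by
    push_cast
    have : ∀ p : Fin m × Fin n, ((|A p.1 p.2| : ℤ) : ZMod 2) = ((A p.1 p.2 : ℤ) : ZMod 2) := by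
      intro p
      rcases abs_choice (A p.1 p.2) with h | h <;> rw [h]
      push_cast
      exact CharTwo.neg_eq _
    rw [Finset.sum_congr rfl (fun p _ => this p), ← Int.cast_sum, htot]
    simp
  have h2 : (2 : ℤ) ∣ ∑ v ∈ S, v := by
    rw [hsum]
    exact (ZMod.intCast_zmod_eq_zero_iff_dvd _ 2).mp hpar
  obtain ⟨k, hk⟩ := h2
  have hgauss : (∑ v ∈ S, v) * 2 = (N : ℤ) * (N + 1) := by
    rw [hS, hNcast]; exact gauss_Icc_int N
  have h4 : (4 : ℤ) ∣ (N : ℤ) * (N + 1) := ⟨k, by rw [← hgauss, hk]; ring⟩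
  have h4n : 4 ∣ N * (N + 1) := by exact_mod_cast h4
  have hz : N * (N + 1) % 4 = 0 := by omega
  have hm : N * (N + 1) % 4 = (N % 4) * ((N % 4 + 1 % 4) % 4) % 4 := by
    conv_lhs => rw [Nat.mul_mod, Nat.add_mod N 1 4]
  have h0 : N % 4 = 0 ∨ N % 4 = 1 ∨ N % 4 = 2 ∨ N % 4 = 3 := by omega
  rcases h0 with h | h | h | h
  · exact Or.inl h
  · rw [h] at hm; norm_num at hm; omega
  · rw [h] at hm; norm_num at hm; omega
  · exact Or.inr h
end

section
/- For all even integers m, n with m ≥ 4 and n ≥ 4, there exists a shiftable integer Heffter array H_s(m,n); that is, an m × n integer matrix with all row and column sums equal to 0, whose entries have absolute values exactly {1, ..., mn}, and with equally many positive and negative entries in every row and column. -/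
open Finset

def HAo (m n : ℕ) (s : ℤ) (A : Fin m → Fin n → ℤ) : Prop :=
  (∀ i, ∑ j, A i j = 0) ∧
  (∀ j, ∑ i, A i j = 0) ∧
  (∀ i j, s + 1 ≤ |A i j| ∧ |A i j| ≤ s + (m : ℤ) * n) ∧
  (∀ v ∈ Finset.Icc (s + 1) (s + (m : ℤ) * n),
      ∃ p : Fin m × Fin n, |A p.1 p.2| = v ∧ ∀ q : Fin m × Fin n, |A q.1 q.2| = v → q = p) ∧
  (∀ i, (Finset.univ.filter (fun j => 0 < A i j)).card
      = (Finset.univ.filter (fun j => A i j < 0)).card) ∧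
  (∀ j, (Finset.univ.filter (fun i => 0 < A i j)).card
      = (Finset.univ.filter (fun i => A i j < 0)).card)

def B44 : Fin 4 → Fin 4 → ℤ :=
  ![![1, -2, 6, -5], ![-3, 4, -8, 7], ![11, -12, 16, -15], ![-9, 10, -14, 13]]

lemma base44 : HAo 4 4 0 B44 := by unfold HAo; decide

def B46 : Fin 4 → Fin 6 → ℤ :=
  ![![1, -2, 5, -6, 11, -9], ![-3, 4, -7, 8, -12, 10],
    ![15, -16, 19, -20, 24, -22], ![-13, 14, -17, 18, -23, 21]]

lemma base46 : HAo 4 6 0 B46 := by unfold HAo; decide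

def B66 : Fin 6 → Fin 6 → ℤ :=
  ![![12, -27, 17, -28, 29, -3], ![-13, 7, -11, 14, -2, 5], ![18, -1, 16, -22, 24, -35],
    ![-6, 26, -36, 31, -23, 8], ![10, -20, 33, -25, -32, 34], ![-21, 15, -19, 30, 4, -9]]

lemma base66 : HAo 6 6 0 B66 := by unfold HAo; decide

lemma HAo.transpose {m n : ℕ} {s : ℤ} {A : Fin m → Fin n → ℤ} (h : HAo m n s A) :
    HAo n m s (fun j i => A i j) := by
  obtain ⟨h1, h2, h3, h4, h5, h6⟩ := h
  have hmn : s + (n : ℤ) * m = s + (m : ℤ) * n := by ring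
  refine ⟨h2, h1, fun j i => by rw [hmn]; exact h3 i j, ?_, h6, h5⟩
  intro v hv
  rw [hmn] at hv
  obtain ⟨p, hp, hu⟩ := h4 v hv
  refine ⟨(p.2, p.1), hp, fun q hq => ?_⟩
  have := hu (q.2, q.1) hq
  exact Prod.ext (congrArg Prod.snd this) (congrArg Prod.fst this)

lemma shift_abs {x s : ℤ} (hx : x ≠ 0) (hs : 0 ≤ s) :
    |(if 0 < x then x + s else x - s)| = |x| + s ∧
    (0 < (if 0 < x then x + s else x - s) ↔ 0 < x) ∧
    ((if 0 < x then x + s else x - s) < 0 ↔ x < 0) := by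
  rcases lt_or_gt_of_ne hx with h | h
  · rw [if_neg (by omega), abs_of_neg h, abs_of_neg (by omega)]
    omega
  · rw [if_pos h, abs_of_pos h, abs_of_pos (by omega)]
    omega

lemma HAo.shift {m n : ℕ} {A : Fin m → Fin n → ℤ} (h : HAo m n 0 A) (s : ℤ) (hs : 0 ≤ s) :
    HAo m n s (fun i j => if 0 < A i j then A i j + s else A i j - s) := by
  obtain ⟨h1, h2, h3, h4, h5, h6⟩ := h
  have hne : ∀ i j, A i j ≠ 0 := by
    intro i j e
    have := (h3 i j).1
    rw [e] at this
    simp at this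
  have key := fun i j => shift_abs (hne i j) hs
  have hflt : ∀ i, (Finset.univ.filter (fun j => ¬ 0 < A i j))
      = (Finset.univ.filter (fun j => A i j < 0)) := by
    intro i
    apply Finset.filter_congr
    intro j _
    have := hne i j
    constructor <;> intro <;> omega
  have hfltc : ∀ j, (Finset.univ.filter (fun i => ¬ 0 < A i j))
      = (Finset.univ.filter (fun i => A i j < 0)) := by
    intro j
    apply Finset.filter_congr
    intro i _
    have := hne i j
    constructor <;> intro <;> omega
  have sumaux : ∀ (k : ℕ) (f : Fin k → ℤ)
      (hf : ∀ t, f t ≠ 0)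
      (hbal : (Finset.univ.filter (fun t => 0 < f t)).card
        = (Finset.univ.filter (fun t => f t < 0)).card)
      (hz : ∑ t, f t = 0),
      ∑ t, (if 0 < f t then f t + s else f t - s) = 0 := by
    intro k f hf hbal hz
    have : ∀ t, (if 0 < f t then f t + s else f t - s)
        = f t + (if 0 < f t then s else -s) := by
      intro t; split <;> ring
    rw [Finset.sum_congr rfl (fun t _ => this t), Finset.sum_add_distrib, hz, zero_add,
      Finset.sum_ite, Finset.sum_const, Finset.sum_const]
    have : (Finset.univ.filter (fun t => ¬ 0 < f t))
        = (Finset.univ.filter (fun t => f t < 0)) := by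
      apply Finset.filter_congr
      intro t _
      have := hf t
      constructor <;> intro <;> omega
    rw [this, hbal]
    simp [smul_neg]
  refine ⟨?_, ?_, ?_, ?_, ?_, ?_⟩
  · intro i
    exact sumaux n (fun j => A i j) (hne i) (h5 i) (h1 i)
  · intro j
    exact sumaux m (fun i => A i j) (fun i => hne i j) (h6 j) (h2 j)
  · intro i j
    rw [(key i j).1]
    have := h3 i j
    constructor <;> linarith [this.1, this.2]
  · intro v hv
    rw [Finset.mem_Icc] at hv
    obtain ⟨p, hp, hu⟩ := h4 (v - s) (by rw [Finset.mem_Icc]; constructor <;> linarith [hv.1, hv.2])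
    refine ⟨p, ?_, ?_⟩
    · rw [(key p.1 p.2).1, hp]; ring
    · intro q hq
      apply hu
      rw [(key q.1 q.2).1] at hq
      linarith
  · intro i
    have e1 : (Finset.univ.filter (fun j => 0 < if 0 < A i j then A i j + s else A i j - s))
        = (Finset.univ.filter (fun j => 0 < A i j)) :=
      Finset.filter_congr (fun j _ => (key i j).2.1)
    have e2 : (Finset.univ.filter (fun j => (if 0 < A i j then A i j + s else A i j - s) < 0))
        = (Finset.univ.filter (fun j => A i j < 0)) :=
      Finset.filter_congr (fun j _ => (key i j).2.2)
    rw [e1, e2]; exact h5 i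
  · intro j
    have e1 : (Finset.univ.filter (fun i => 0 < if 0 < A i j then A i j + s else A i j - s))
        = (Finset.univ.filter (fun i => 0 < A i j)) :=
      Finset.filter_congr (fun i _ => (key i j).2.1)
    have e2 : (Finset.univ.filter (fun i => (if 0 < A i j then A i j + s else A i j - s) < 0))
        = (Finset.univ.filter (fun i => A i j < 0)) :=
      Finset.filter_congr (fun i _ => (key i j).2.2)
    rw [e1, e2]; exact h6 j

lemma card_filter_fin_add {m1 m2 : ℕ} (p : Fin (m1 + m2) → Prop) [DecidablePred p] :
    (Finset.univ.filter p).card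
      = (Finset.univ.filter (fun i => p (Fin.castAdd m2 i))).card
        + (Finset.univ.filter (fun i => p (Fin.natAdd m1 i))).card := by
  rw [Finset.card_filter, Finset.card_filter, Finset.card_filter, Fin.sum_univ_add]

lemma HAo.vstack {m1 m2 n : ℕ} {A : Fin m1 → Fin n → ℤ} {B : Fin m2 → Fin n → ℤ}
    (hA : HAo m1 n 0 A) (hB : HAo m2 n ((m1 : ℤ) * n) B) :
    HAo (m1 + m2) n 0
      (fun i j => Fin.addCases (motive := fun _ => ℤ) (fun i1 => A i1 j) (fun i2 => B i2 j) i) := by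
  obtain ⟨a1, a2, a3, a4, a5, a6⟩ := hA
  obtain ⟨b1, b2, b3, b4, b5, b6⟩ := hB
  have hcast : ((m1 : ℤ) + m2) * n = (m1 : ℤ) * n + (m2 : ℤ) * n := by ring
  refine ⟨?_, ?_, ?_, ?_, ?_, ?_⟩
  · intro i
    induction i using Fin.addCases with
    | left i1 => simp only [Fin.addCases_left]; exact a1 i1
    | right i2 => simp only [Fin.addCases_right]; exact b1 i2
  · intro j
    rw [Fin.sum_univ_add]
    simp only [Fin.addCases_left, Fin.addCases_right]
    rw [a2 j, b2 j]
    norm_num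
  · intro i j
    induction i using Fin.addCases with
    | left i1 =>
      simp only [Fin.addCases_left]
      have := a3 i1 j
      have h2 : (0:ℤ) ≤ (m2 : ℤ) * n := by positivity
      push_cast
      constructor <;> nlinarith [this.1, this.2]
    | right i2 =>
      simp only [Fin.addCases_right]
      have := b3 i2 j
      have h1 : (0:ℤ) ≤ (m1 : ℤ) * n := by positivity
      push_cast
      constructor <;> nlinarith [this.1, this.2]
  · intro v hv
    rw [Finset.mem_Icc] at hv
    push_cast at hv
    by_cases hcase : v ≤ (m1 : ℤ) * n
    · obtain ⟨p, hp, hu⟩ := a4 v (by rw [Finset.mem_Icc]; constructor <;> linarith [hv.1])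
      refine ⟨(Fin.castAdd m2 p.1, p.2), by simpa using hp, ?_⟩
      rintro ⟨qi, qj⟩ hq
      induction qi using Fin.addCases with
      | left i1 =>
        simp only [Fin.addCases_left] at hq
        have := hu (i1, qj) hq
        rw [Prod.ext_iff] at this ⊢
        exact ⟨congrArg (Fin.castAdd m2) this.1, this.2⟩
      | right i2 =>
        simp only [Fin.addCases_right] at hq
        have := (b3 i2 qj).1
        rw [hq] at this
        linarith
    · obtain ⟨p, hp, hu⟩ := b4 v (by
        rw [Finset.mem_Icc]
        constructor
        · linarith
        · nlinarith [hv.2])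
      refine ⟨(Fin.natAdd m1 p.1, p.2), by simpa using hp, ?_⟩
      rintro ⟨qi, qj⟩ hq
      induction qi using Fin.addCases with
      | left i1 =>
        simp only [Fin.addCases_left] at hq
        have := (a3 i1 qj).2
        rw [hq] at this
        linarith
      | right i2 =>
        simp only [Fin.addCases_right] at hq
        have := hu (i2, qj) hq
        rw [Prod.ext_iff] at this ⊢
        exact ⟨congrArg (Fin.natAdd m1) this.1, this.2⟩
  · intro i
    induction i using Fin.addCases with
    | left i1 => simpa only [Fin.addCases_left] using a5 i1
    | right i2 => simpa only [Fin.addCases_right] using b5 i2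
  · intro j
    rw [card_filter_fin_add, card_filter_fin_add]
    simp only [Fin.addCases_left, Fin.addCases_right]
    rw [a6 j, b6 j]

def EHA (m n : ℕ) : Prop := ∃ A : Fin m → Fin n → ℤ, HAo m n 0 A

lemma EHA.transpose {m n : ℕ} (h : EHA m n) : EHA n m := by
  obtain ⟨A, hA⟩ := h
  exact ⟨_, hA.transpose⟩

lemma EHA.vert {m1 m2 n : ℕ} (h1 : EHA m1 n) (h2 : EHA m2 n) : EHA (m1 + m2) n := by
  obtain ⟨A, hA⟩ := h1
  obtain ⟨B, hB⟩ := h2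
  exact ⟨_, hA.vstack (hB.shift ((m1 : ℤ) * n) (by positivity))⟩

lemma EHA.horiz {m n1 n2 : ℕ} (h1 : EHA m n1) (h2 : EHA m n2) : EHA m (n1 + n2) :=
  (h1.transpose.vert h2.transpose).transpose

lemma EHA_cast {m k n : ℕ} (e : m = k) (h : EHA k n) : EHA m n := by subst e; exact h

lemma EHA_cast' {m k n : ℕ} (e : n = k) (h : EHA m k) : EHA m n := by subst e; exact h

lemma rowP {p : ℕ} (base4 : EHA p 4) (base6 : EHA p 6) :
    ∀ n, n % 2 = 0 → 4 ≤ n → EHA p n := by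
  intro n
  induction n using Nat.strong_induction_on with
  | _ n ih =>
    intro hn hn4
    rcases Nat.lt_or_ge n 8 with h8 | h8
    · interval_cases n <;> first | exact base4 | exact base6 | omega
    · have h2 : EHA p (n - 4) := ih (n - 4) (by omega) (by omega) (by omega)
      exact EHA_cast' (by omega : n = 4 + (n - 4)) (base4.horiz h2)

lemma mainEHA : ∀ m, m % 2 = 0 → 4 ≤ m → ∀ n, n % 2 = 0 → 4 ≤ n → EHA m n := by
  intro m
  induction m using Nat.strong_induction_on with
  | _ m ih =>
    intro hm hm4 n hn hn4
    rcases Nat.lt_or_ge m 8 with h8 | h8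
    · interval_cases m <;>
        first
          | exact rowP ⟨_, base44⟩ ⟨_, base46⟩ n hn hn4
          | exact rowP ⟨_, base46.transpose⟩ ⟨_, base66⟩ n hn hn4
          | omega
    · have h2 : EHA (m - 4) n := ih (m - 4) (by omega) (by omega) (by omega) n hn hn4
      have h1 : EHA 4 n := rowP ⟨_, base44⟩ ⟨_, base46⟩ n hn hn4
      exact EHA_cast (by omega : m = 4 + (m - 4)) (h1.vert h2)

/-- For all even m, n ≥ 4 there exists a shiftable integer Heffter array H_s(m,n). -/
theorem stmt_9 (m n : ℕ) (hm : Even m) (hn : Even n) (hm4 : 4 ≤ m) (hn4 : 4 ≤ n) :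
    ∃ A : Fin m → Fin n → ℤ,
      (∀ i, ∑ j, A i j = 0) ∧
      (∀ j, ∑ i, A i j = 0) ∧
      (∀ v ∈ Finset.Icc (1 : ℤ) (m * n), ∃! p : Fin m × Fin n, |A p.1 p.2| = v) ∧
      (∀ i, (Finset.univ.filter (fun j => 0 < A i j)).card
        = (Finset.univ.filter (fun j => A i j < 0)).card) ∧
      (∀ j, (Finset.univ.filter (fun i => 0 < A i j)).card
        = (Finset.univ.filter (fun i => A i j < 0)).card) := by
  rw [Nat.even_iff] at hm hn
  obtain ⟨A, h1, h2, h3, h4, h5, h6⟩ := mainEHA m hm hm4 n hn hn4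
  refine ⟨A, h1, h2, ?_, h5, h6⟩
  intro v hv
  rw [Finset.mem_Icc] at hv
  obtain ⟨p, hp, hu⟩ := h4 v (by rw [Finset.mem_Icc]; push_cast; constructor <;> linarith [hv.1, hv.2])
  exact ⟨p, hp, hu⟩
end

section
/- Given a Skolem sequence of order n, the triples T_k = {k, ℓ(k)+n, r(k)+n} for 1 ≤ k ≤ n partition {1, 2, ..., 3n} into n triples {a,b,c} each satisfying a + b = c. -/
/-- Given a Skolem sequence of order n, the triples {k, ℓ(k)+n, r(k)+n} partition
{1,...,3n} into triples {a,b,c} with a + b = c. -/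
theorem stmt_11 (n : ℕ) (s ℓ r : ℕ → ℕ)
    (hs : ∀ p ∈ Finset.Icc 1 (2 * n), s p ∈ Finset.Icc 1 n)
    (hmem : ∀ k ∈ Finset.Icc 1 n,
      ℓ k ∈ Finset.Icc 1 (2 * n) ∧ r k ∈ Finset.Icc 1 (2 * n) ∧
      ℓ k < r k ∧ r k - ℓ k = k ∧ s (ℓ k) = k ∧ s (r k) = k ∧
      ∀ p ∈ Finset.Icc 1 (2 * n), s p = k → p = ℓ k ∨ p = r k) :
    (∀ k ∈ Finset.Icc 1 n, k + (ℓ k + n) = r k + n) ∧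
    (∀ k ∈ Finset.Icc 1 n, ({k, ℓ k + n, r k + n} : Finset ℕ).card = 3) ∧
    ((Finset.Icc 1 n : Finset ℕ) : Set ℕ).Pairwise
      (fun k k' => Disjoint ({k, ℓ k + n, r k + n} : Finset ℕ)
        {k', ℓ k' + n, r k' + n}) ∧
    (Finset.Icc 1 (3 * n)
      = (Finset.Icc 1 n).biUnion (fun k => {k, ℓ k + n, r k + n})) := by
  refine ⟨?_, ?_, ?_, ?_⟩
  · intro k hk
    obtain ⟨hl, hr, hlt, hsub, -⟩ := hmem k hk
    omega
  · intro k hk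
    obtain ⟨hl, hr, hlt, hsub, -⟩ := hmem k hk
    simp only [Finset.mem_Icc] at hk hl hr
    rw [Finset.card_insert_of_notMem, Finset.card_insert_of_notMem,
      Finset.card_singleton]
    · simp only [Finset.mem_singleton]; omega
    · simp only [Finset.mem_insert, Finset.mem_singleton]
      push_neg
      omega
  · intro k hk k' hk' hne
    obtain ⟨hl, hr, hlt, hsub, hsl, hsr, -⟩ := hmem k (by simpa using hk)
    obtain ⟨hl', hr', hlt', hsub', hsl', hsr', -⟩ := hmem k' (by simpa using hk')
    simp only [Finset.coe_Icc, Set.mem_Icc] at hk hk'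
    have hll : ℓ k ≠ ℓ k' := fun h => hne (by rw [← hsl, h, hsl'])
    have hrr : r k ≠ r k' := fun h => hne (by rw [← hsr, h, hsr'])
    have hlr : ℓ k ≠ r k' := fun h => hne (by rw [← hsl, h, hsr'])
    have hrl : r k ≠ ℓ k' := fun h => hne (by rw [← hsr, h, hsl'])
    simp only [Finset.mem_Icc] at hl hr hl' hr'
    simp only [Finset.disjoint_left, Finset.mem_insert, Finset.mem_singleton]
    rintro x (rfl | rfl | rfl) <;> push_neg <;> omega
  · ext x
    simp only [Finset.mem_biUnion, Finset.mem_Icc, Finset.mem_insert,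
      Finset.mem_singleton]
    constructor
    · rintro ⟨h1, h3⟩
      by_cases hx : x ≤ n
      · exact ⟨x, ⟨h1, hx⟩, Or.inl rfl⟩
      · have hp : x - n ∈ Finset.Icc 1 (2 * n) := by
          simp only [Finset.mem_Icc]; omega
        have hk := hs _ hp
        simp only [Finset.mem_Icc] at hk
        obtain ⟨hl, hr, hlt, hsub, hsl, hsr, huniq⟩ :=
          hmem (s (x - n)) (by simp only [Finset.mem_Icc]; omega)
        rcases huniq _ hp rfl with h | h
        · exact ⟨s (x - n), ⟨hk.1, hk.2⟩, Or.inr (Or.inl (by omega))⟩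
        · exact ⟨s (x - n), ⟨hk.1, hk.2⟩, Or.inr (Or.inr (by omega))⟩
    · rintro ⟨k, hk, h | h | h⟩ <;>
      · obtain ⟨hl, hr, -⟩ := hmem k (Finset.mem_Icc.mpr hk)
        simp only [Finset.mem_Icc] at hl hr
        omega
end

section
/- For every k ≥ 0, define the 3 × 8 tile A with transpose rows (-12k-13, 4k+4, 8k+9), (-10k-11, -8k-7, 18k+18), (4k+6, 18k+17, -22k-23), (4k+3, 18k+19, -22k-22), (10k+10, 4k+5, -14k-15), (-4k-8, -18k-16, 22k+24), (12k+14, -2, -12k-12), (-1, -20k-20, 20k+21), and for 0 ≤ r ≤ k-1 the tile A_r with transpose rows (8k+2r+10, 8k-4r+5, -16k+2r-15), (-8k+4r-8, -16k-2r-16, 24k-2r+24), (14k-2r+14, -4k+4r-2, -10k-2r-12), (-4k+4r-1, -18k-2r-20, 22k-2r+21), (-8k-2r-11, -8k+4r-3, 16k-2r+14), (8k-4r+6, 16k+2r+17, -24k+2r-23), (-14k+2r-13, 4k-4r, 10k+2r+13), (4k-4r-1, 18k+2r+21, -22k+2r-20). Then the horizontal concatenation H = [A | A_0 | ... | A_{k-1}]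 is an integer Heffter array H(3, 8k+8): all row and column sums are 0 and the absolute values of the entries are exactly {1, ..., 24k+24}. -/
private def Hav (k : ℕ) : ℕ → ℕ → ℤ
  | 0, 0 => -12*(k:ℤ) - 13
  | 0, 1 => -10*(k:ℤ) - 11
  | 0, 2 => 4*(k:ℤ) + 6
  | 0, 3 => 4*(k:ℤ) + 3
  | 0, 4 => 10*(k:ℤ) + 10
  | 0, 5 => -4*(k:ℤ) - 8
  | 0, 6 => 12*(k:ℤ) + 14
  | 0, 7 => -1
  | 1, 0 => 4*(k:ℤ) + 4
  | 1, 1 => -8*(k:ℤ) - 7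
  | 1, 2 => 18*(k:ℤ) + 17
  | 1, 3 => 18*(k:ℤ) + 19
  | 1, 4 => 4*(k:ℤ) + 5
  | 1, 5 => -18*(k:ℤ) - 16
  | 1, 6 => -2
  | 1, 7 => -20*(k:ℤ) - 20
  | 2, 0 => 8*(k:ℤ) + 9
  | 2, 1 => 18*(k:ℤ) + 18
  | 2, 2 => -22*(k:ℤ) - 23
  | 2, 3 => -22*(k:ℤ) - 22
  | 2, 4 => -14*(k:ℤ) - 15
  | 2, 5 => 22*(k:ℤ) + 24
  | 2, 6 => -12*(k:ℤ) - 12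
  | 2, 7 => 20*(k:ℤ) + 21
  | _, _ => 0

private def Hbv (k r : ℕ) : ℕ → ℕ → ℤ
  | 0, 0 => 8*(k:ℤ) + 2*(r:ℤ) + 10
  | 0, 1 => -8*(k:ℤ) + 4*(r:ℤ) - 8
  | 0, 2 => 14*(k:ℤ) - 2*(r:ℤ) + 14
  | 0, 3 => -4*(k:ℤ) + 4*(r:ℤ) - 1
  | 0, 4 => -8*(k:ℤ) - 2*(r:ℤ) - 11
  | 0, 5 => 8*(k:ℤ) - 4*(r:ℤ) + 6
  | 0, 6 => -14*(k:ℤ) + 2*(r:ℤ) - 13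
  | 0, 7 => 4*(k:ℤ) - 4*(r:ℤ) - 1
  | 1, 0 => 8*(k:ℤ) - 4*(r:ℤ) + 5
  | 1, 1 => -16*(k:ℤ) - 2*(r:ℤ) - 16
  | 1, 2 => -4*(k:ℤ) + 4*(r:ℤ) - 2
  | 1, 3 => -18*(k:ℤ) - 2*(r:ℤ) - 20
  | 1, 4 => -8*(k:ℤ) + 4*(r:ℤ) - 3
  | 1, 5 => 16*(k:ℤ) + 2*(r:ℤ) + 17
  | 1, 6 => 4*(k:ℤ) - 4*(r:ℤ)
  | 1, 7 => 18*(k:ℤ) + 2*(r:ℤ) + 21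
  | 2, 0 => -16*(k:ℤ) + 2*(r:ℤ) - 15
  | 2, 1 => 24*(k:ℤ) - 2*(r:ℤ) + 24
  | 2, 2 => -10*(k:ℤ) - 2*(r:ℤ) - 12
  | 2, 3 => 22*(k:ℤ) - 2*(r:ℤ) + 21
  | 2, 4 => 16*(k:ℤ) - 2*(r:ℤ) + 14
  | 2, 5 => -24*(k:ℤ) + 2*(r:ℤ) - 23
  | 2, 6 => 10*(k:ℤ) + 2*(r:ℤ) + 13
  | 2, 7 => -22*(k:ℤ) + 2*(r:ℤ) - 20
  | _, _ => 0

private lemma Hav00 (k : ℕ) : Hav k 0 0 = -12*(k:ℤ) - 13 := rfl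
private lemma Hav01 (k : ℕ) : Hav k 0 1 = -10*(k:ℤ) - 11 := rfl
private lemma Hav02 (k : ℕ) : Hav k 0 2 = 4*(k:ℤ) + 6 := rfl
private lemma Hav03 (k : ℕ) : Hav k 0 3 = 4*(k:ℤ) + 3 := rfl
private lemma Hav04 (k : ℕ) : Hav k 0 4 = 10*(k:ℤ) + 10 := rfl
private lemma Hav05 (k : ℕ) : Hav k 0 5 = -4*(k:ℤ) - 8 := rfl
private lemma Hav06 (k : ℕ) : Hav k 0 6 = 12*(k:ℤ) + 14 := rfl
private lemma Hav07 (k : ℕ) : Hav k 0 7 = -1 := rfl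
private lemma Hav10 (k : ℕ) : Hav k 1 0 = 4*(k:ℤ) + 4 := rfl
private lemma Hav11 (k : ℕ) : Hav k 1 1 = -8*(k:ℤ) - 7 := rfl
private lemma Hav12 (k : ℕ) : Hav k 1 2 = 18*(k:ℤ) + 17 := rfl
private lemma Hav13 (k : ℕ) : Hav k 1 3 = 18*(k:ℤ) + 19 := rfl
private lemma Hav14 (k : ℕ) : Hav k 1 4 = 4*(k:ℤ) + 5 := rfl
private lemma Hav15 (k : ℕ) : Hav k 1 5 = -18*(k:ℤ) - 16 := rfl
private lemma Hav16 (k : ℕ) : Hav k 1 6 = -2 := rfl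
private lemma Hav17 (k : ℕ) : Hav k 1 7 = -20*(k:ℤ) - 20 := rfl
private lemma Hav20 (k : ℕ) : Hav k 2 0 = 8*(k:ℤ) + 9 := rfl
private lemma Hav21 (k : ℕ) : Hav k 2 1 = 18*(k:ℤ) + 18 := rfl
private lemma Hav22 (k : ℕ) : Hav k 2 2 = -22*(k:ℤ) - 23 := rfl
private lemma Hav23 (k : ℕ) : Hav k 2 3 = -22*(k:ℤ) - 22 := rfl
private lemma Hav24 (k : ℕ) : Hav k 2 4 = -14*(k:ℤ) - 15 := rfl
private lemma Hav25 (k : ℕ) : Hav k 2 5 = 22*(k:ℤ) + 24 := rfl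
private lemma Hav26 (k : ℕ) : Hav k 2 6 = -12*(k:ℤ) - 12 := rfl
private lemma Hav27 (k : ℕ) : Hav k 2 7 = 20*(k:ℤ) + 21 := rfl

private lemma Hbv00 (k r : ℕ) : Hbv k r 0 0 = 8*(k:ℤ) + 2*(r:ℤ) + 10 := rfl
private lemma Hbv01 (k r : ℕ) : Hbv k r 0 1 = -8*(k:ℤ) + 4*(r:ℤ) - 8 := rfl
private lemma Hbv02 (k r : ℕ) : Hbv k r 0 2 = 14*(k:ℤ) - 2*(r:ℤ) + 14 := rfl
private lemma Hbv03 (k r : ℕ) : Hbv k r 0 3 = -4*(k:ℤ) + 4*(r:ℤ) - 1 := rfl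
private lemma Hbv04 (k r : ℕ) : Hbv k r 0 4 = -8*(k:ℤ) - 2*(r:ℤ) - 11 := rfl
private lemma Hbv05 (k r : ℕ) : Hbv k r 0 5 = 8*(k:ℤ) - 4*(r:ℤ) + 6 := rfl
private lemma Hbv06 (k r : ℕ) : Hbv k r 0 6 = -14*(k:ℤ) + 2*(r:ℤ) - 13 := rfl
private lemma Hbv07 (k r : ℕ) : Hbv k r 0 7 = 4*(k:ℤ) - 4*(r:ℤ) - 1 := rfl
private lemma Hbv10 (k r : ℕ) : Hbv k r 1 0 = 8*(k:ℤ) - 4*(r:ℤ) + 5 := rfl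
private lemma Hbv11 (k r : ℕ) : Hbv k r 1 1 = -16*(k:ℤ) - 2*(r:ℤ) - 16 := rfl
private lemma Hbv12 (k r : ℕ) : Hbv k r 1 2 = -4*(k:ℤ) + 4*(r:ℤ) - 2 := rfl
private lemma Hbv13 (k r : ℕ) : Hbv k r 1 3 = -18*(k:ℤ) - 2*(r:ℤ) - 20 := rfl
private lemma Hbv14 (k r : ℕ) : Hbv k r 1 4 = -8*(k:ℤ) + 4*(r:ℤ) - 3 := rfl
private lemma Hbv15 (k r : ℕ) : Hbv k r 1 5 = 16*(k:ℤ) + 2*(r:ℤ) + 17 := rfl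
private lemma Hbv16 (k r : ℕ) : Hbv k r 1 6 = 4*(k:ℤ) - 4*(r:ℤ) := rfl
private lemma Hbv17 (k r : ℕ) : Hbv k r 1 7 = 18*(k:ℤ) + 2*(r:ℤ) + 21 := rfl
private lemma Hbv20 (k r : ℕ) : Hbv k r 2 0 = -16*(k:ℤ) + 2*(r:ℤ) - 15 := rfl
private lemma Hbv21 (k r : ℕ) : Hbv k r 2 1 = 24*(k:ℤ) - 2*(r:ℤ) + 24 := rfl
private lemma Hbv22 (k r : ℕ) : Hbv k r 2 2 = -10*(k:ℤ) - 2*(r:ℤ) - 12 := rfl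
private lemma Hbv23 (k r : ℕ) : Hbv k r 2 3 = 22*(k:ℤ) - 2*(r:ℤ) + 21 := rfl
private lemma Hbv24 (k r : ℕ) : Hbv k r 2 4 = 16*(k:ℤ) - 2*(r:ℤ) + 14 := rfl
private lemma Hbv25 (k r : ℕ) : Hbv k r 2 5 = -24*(k:ℤ) + 2*(r:ℤ) - 23 := rfl
private lemma Hbv26 (k r : ℕ) : Hbv k r 2 6 = 10*(k:ℤ) + 2*(r:ℤ) + 13 := rfl
private lemma Hbv27 (k r : ℕ) : Hbv k r 2 7 = -22*(k:ℤ) + 2*(r:ℤ) - 20 := rfl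

set_option maxHeartbeats 1600000 in
private lemma injAA (k i i' j j' : ℕ) (hi : i < 3) (hi' : i' < 3) (hj : j < 8) (hj' : j' < 8)
    (h : |Hav k i j| = |Hav k i' j'|) : i = i' ∧ j = j' := by
  rw [abs_eq_abs] at h
  obtain rfl|rfl|rfl : i = 0 ∨ i = 1 ∨ i = 2 := by omega
  all_goals obtain rfl|rfl|rfl : i' = 0 ∨ i' = 1 ∨ i' = 2 := by omega
  all_goals obtain rfl|rfl|rfl|rfl|rfl|rfl|rfl|rfl : j = 0 ∨ j = 1 ∨ j = 2 ∨ j = 3 ∨ j = 4 ∨ j = 5 ∨ j = 6 ∨ j = 7 := by omega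
  all_goals obtain rfl|rfl|rfl|rfl|rfl|rfl|rfl|rfl : j' = 0 ∨ j' = 1 ∨ j' = 2 ∨ j' = 3 ∨ j' = 4 ∨ j' = 5 ∨ j' = 6 ∨ j' = 7 := by omega
  all_goals simp only [Hav00, Hav01, Hav02, Hav03, Hav04, Hav05, Hav06, Hav07, Hav10, Hav11, Hav12, Hav13, Hav14, Hav15, Hav16, Hav17, Hav20, Hav21, Hav22, Hav23, Hav24, Hav25, Hav26, Hav27] at h
  all_goals omega

set_option maxHeartbeats 1600000 in
private lemma injAB (k r i i' j j' : ℕ) (hr : r < k) (hi : i < 3) (hi' : i' < 3)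
    (hj : j < 8) (hj' : j' < 8)
    (h : |Hav k i j| = |Hbv k r i' j'|) : False := by
  rw [abs_eq_abs] at h
  obtain rfl|rfl|rfl : i = 0 ∨ i = 1 ∨ i = 2 := by omega
  all_goals obtain rfl|rfl|rfl : i' = 0 ∨ i' = 1 ∨ i' = 2 := by omega
  all_goals obtain rfl|rfl|rfl|rfl|rfl|rfl|rfl|rfl : j = 0 ∨ j = 1 ∨ j = 2 ∨ j = 3 ∨ j = 4 ∨ j = 5 ∨ j = 6 ∨ j = 7 := by omega
  all_goals obtain rfl|rfl|rfl|rfl|rfl|rfl|rfl|rfl : j' = 0 ∨ j' = 1 ∨ j' = 2 ∨ j' = 3 ∨ j' = 4 ∨ j' = 5 ∨ j' = 6 ∨ j' = 7 := by omega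
  all_goals simp only [Hav00, Hav01, Hav02, Hav03, Hav04, Hav05, Hav06, Hav07, Hav10, Hav11, Hav12, Hav13, Hav14, Hav15, Hav16, Hav17, Hav20, Hav21, Hav22, Hav23, Hav24, Hav25, Hav26, Hav27, Hbv00, Hbv01, Hbv02, Hbv03, Hbv04, Hbv05, Hbv06, Hbv07, Hbv10, Hbv11, Hbv12, Hbv13, Hbv14, Hbv15, Hbv16, Hbv17, Hbv20, Hbv21, Hbv22, Hbv23, Hbv24, Hbv25, Hbv26, Hbv27] at h
  all_goals omega

set_option maxHeartbeats 1600000 in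
private lemma injBB (k r s i i' j j' : ℕ) (hr : r < k) (hs : s < k) (hi : i < 3) (hi' : i' < 3)
    (hj : j < 8) (hj' : j' < 8)
    (h : |Hbv k r i j| = |Hbv k s i' j'|) : i = i' ∧ j = j' ∧ r = s := by
  rw [abs_eq_abs] at h
  obtain rfl|rfl|rfl : i = 0 ∨ i = 1 ∨ i = 2 := by omega
  all_goals obtain rfl|rfl|rfl : i' = 0 ∨ i' = 1 ∨ i' = 2 := by omega
  all_goals obtain rfl|rfl|rfl|rfl|rfl|rfl|rfl|rfl : j = 0 ∨ j = 1 ∨ j = 2 ∨ j = 3 ∨ j = 4 ∨ j = 5 ∨ j = 6 ∨ j = 7 := by omega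
  all_goals obtain rfl|rfl|rfl|rfl|rfl|rfl|rfl|rfl : j' = 0 ∨ j' = 1 ∨ j' = 2 ∨ j' = 3 ∨ j' = 4 ∨ j' = 5 ∨ j' = 6 ∨ j' = 7 := by omega
  all_goals simp only [Hbv00, Hbv01, Hbv02, Hbv03, Hbv04, Hbv05, Hbv06, Hbv07, Hbv10, Hbv11, Hbv12, Hbv13, Hbv14, Hbv15, Hbv16, Hbv17, Hbv20, Hbv21, Hbv22, Hbv23, Hbv24, Hbv25, Hbv26, Hbv27] at h
  all_goals omega

private lemma memA (k i j : ℕ) (hi : i < 3) (hj : j < 8) :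
    1 ≤ |Hav k i j| ∧ |Hav k i j| ≤ 24*(k:ℤ) + 24 := by
  obtain rfl|rfl|rfl : i = 0 ∨ i = 1 ∨ i = 2 := by omega
  all_goals obtain rfl|rfl|rfl|rfl|rfl|rfl|rfl|rfl : j = 0 ∨ j = 1 ∨ j = 2 ∨ j = 3 ∨ j = 4 ∨ j = 5 ∨ j = 6 ∨ j = 7 := by omega
  all_goals simp only [Hav00, Hav01, Hav02, Hav03, Hav04, Hav05, Hav06, Hav07, Hav10, Hav11, Hav12, Hav13, Hav14, Hav15, Hav16, Hav17, Hav20, Hav21, Hav22, Hav23, Hav24, Hav25, Hav26, Hav27]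
  all_goals rw [le_abs, abs_le]
  all_goals omega

private lemma memB (k r i j : ℕ) (hr : r < k) (hi : i < 3) (hj : j < 8) :
    1 ≤ |Hbv k r i j| ∧ |Hbv k r i j| ≤ 24*(k:ℤ) + 24 := by
  obtain rfl|rfl|rfl : i = 0 ∨ i = 1 ∨ i = 2 := by omega
  all_goals obtain rfl|rfl|rfl|rfl|rfl|rfl|rfl|rfl : j = 0 ∨ j = 1 ∨ j = 2 ∨ j = 3 ∨ j = 4 ∨ j = 5 ∨ j = 6 ∨ j = 7 := by omega
  all_goals simp only [Hbv00, Hbv01, Hbv02, Hbv03, Hbv04, Hbv05, Hbv06, Hbv07, Hbv10, Hbv11, Hbv12, Hbv13, Hbv14, Hbv15, Hbv16, Hbv17, Hbv20, Hbv21, Hbv22, Hbv23, Hbv24, Hbv25, Hbv26, Hbv27]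
  all_goals rw [le_abs, abs_le]
  all_goals omega

private def rowBc : ℕ → ℤ
  | 0 => -4
  | 1 => 2
  | 2 => 2
  | _ => 0

private lemma rowBsum (k r i : ℕ) (hi : i < 3) :
    Hbv k r i 0 + Hbv k r i 1 + Hbv k r i 2 + Hbv k r i 3 + Hbv k r i 4 + Hbv k r i 5 + Hbv k r i 6 + Hbv k r i 7 = rowBc i := by
  obtain rfl|rfl|rfl : i = 0 ∨ i = 1 ∨ i = 2 := by omega
  all_goals simp only [Hbv00, Hbv01, Hbv02, Hbv03, Hbv04, Hbv05, Hbv06, Hbv07, Hbv10, Hbv11, Hbv12, Hbv13, Hbv14, Hbv15, Hbv16, Hbv17, Hbv20, Hbv21, Hbv22, Hbv23, Hbv24, Hbv25, Hbv26, Hbv27, rowBc]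
  all_goals ring

private lemma rowTotal (k i : ℕ) (hi : i < 3) :
    (Hav k i 0 + Hav k i 1 + Hav k i 2 + Hav k i 3 + Hav k i 4 + Hav k i 5 + Hav k i 6 + Hav k i 7) + (k:ℤ) * rowBc i = 0 := by
  obtain rfl|rfl|rfl : i = 0 ∨ i = 1 ∨ i = 2 := by omega
  all_goals simp only [Hav00, Hav01, Hav02, Hav03, Hav04, Hav05, Hav06, Hav07, Hav10, Hav11, Hav12, Hav13, Hav14, Hav15, Hav16, Hav17, Hav20, Hav21, Hav22, Hav23, Hav24, Hav25, Hav26, Hav27, rowBc]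
  all_goals ring

private lemma colA (k j : ℕ) (hj : j < 8) :
    Hav k 0 j + Hav k 1 j + Hav k 2 j = 0 := by
  obtain rfl|rfl|rfl|rfl|rfl|rfl|rfl|rfl : j = 0 ∨ j = 1 ∨ j = 2 ∨ j = 3 ∨ j = 4 ∨ j = 5 ∨ j = 6 ∨ j = 7 := by omega
  all_goals simp only [Hav00, Hav01, Hav02, Hav03, Hav04, Hav05, Hav06, Hav07, Hav10, Hav11, Hav12, Hav13, Hav14, Hav15, Hav16, Hav17, Hav20, Hav21, Hav22, Hav23, Hav24, Hav25, Hav26, Hav27]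
  all_goals ring

private lemma colB (k r j : ℕ) (hj : j < 8) :
    Hbv k r 0 j + Hbv k r 1 j + Hbv k r 2 j = 0 := by
  obtain rfl|rfl|rfl|rfl|rfl|rfl|rfl|rfl : j = 0 ∨ j = 1 ∨ j = 2 ∨ j = 3 ∨ j = 4 ∨ j = 5 ∨ j = 6 ∨ j = 7 := by omega
  all_goals simp only [Hbv00, Hbv01, Hbv02, Hbv03, Hbv04, Hbv05, Hbv06, Hbv07, Hbv10, Hbv11, Hbv12, Hbv13, Hbv14, Hbv15, Hbv16, Hbv17, Hbv20, Hbv21, Hbv22, Hbv23, Hbv24, Hbv25, Hbv26, Hbv27]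
  all_goals ring

/-- The explicit tiles A and A_r concatenate to an integer Heffter array H(3,8k+8). -/
theorem stmt_13 (k : ℕ) :
    let A : Matrix (Fin 3) (Fin 8) ℤ :=
      !![-12*(k:ℤ) - 13, -10*k - 11, 4*k + 6, 4*k + 3, 10*k + 10, -4*k - 8, 12*k + 14, -1;
         4*(k:ℤ) + 4, -8*k - 7, 18*k + 17, 18*k + 19, 4*k + 5, -18*k - 16, -2, -20*k - 20;
         8*(k:ℤ) + 9, 18*k + 18, -22*k - 23, -22*k - 22, -14*k - 15, 22*k + 24, -12*k - 12, 20*k + 21]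
    let B : Fin k → Matrix (Fin 3) (Fin 8) ℤ := fun r =>
      !![8*(k:ℤ) + 2*r + 10, -8*k + 4*r - 8, 14*k - 2*r + 14, -4*k + 4*r - 1,
           -8*k - 2*r - 11, 8*k - 4*r + 6, -14*k + 2*r - 13, 4*k - 4*r - 1;
         8*(k:ℤ) - 4*r + 5, -16*k - 2*r - 16, -4*k + 4*r - 2, -18*k - 2*r - 20,
           -8*k + 4*r - 3, 16*k + 2*r + 17, 4*k - 4*r, 18*k + 2*r + 21;
         -16*(k:ℤ) + 2*r - 15, 24*k - 2*r + 24, -10*k - 2*r - 12, 22*k - 2*r + 21,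
           16*k - 2*r + 14, -24*k + 2*r - 23, 10*k + 2*r + 13, -22*k + 2*r - 20]
    let H : Fin 3 → Fin 8 ⊕ (Fin k × Fin 8) → ℤ :=
      fun i => Sum.elim (A i) (fun q => B q.1 i q.2)
    (∀ i, ∑ j, H i j = 0) ∧
    (∀ j, ∑ i, H i j = 0) ∧
    (∀ v ∈ Finset.Icc (1 : ℤ) (24 * k + 24),
      ∃! p : Fin 3 × (Fin 8 ⊕ (Fin k × Fin 8)), |H p.1 p.2| = v) := by
  intro A B H
  have hA : ∀ (i : Fin 3) (j : Fin 8), A i j = Hav k i.val j.val := by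
    intro i j; fin_cases i <;> fin_cases j <;> rfl
  have hB : ∀ (r : Fin k) (i : Fin 3) (j : Fin 8), B r i j = Hbv k r.val i.val j.val := by
    intro r i j; fin_cases i <;> fin_cases j <;> rfl
  have hHl : ∀ (i : Fin 3) (j : Fin 8), H i (Sum.inl j) = Hav k i.val j.val := fun i j => hA i j
  have hHr : ∀ (i : Fin 3) (r : Fin k) (j : Fin 8),
      H i (Sum.inr (r, j)) = Hbv k r.val i.val j.val := fun i r j => hB r i j
  refine ⟨?_, ?_, ?_⟩
  · -- rows
    intro i
    rw [Fintype.sum_sum_type, Fintype.sum_prod_type]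
    simp only [hHl, hHr]
    have h3 : ∀ r : Fin k, ∑ a : Fin 8, Hbv k r.val i.val a.val = rowBc i.val := by
      intro r
      rw [Fin.sum_univ_eight]
      exact rowBsum k r.val i.val i.isLt
    rw [Finset.sum_congr rfl fun r _ => h3 r, Finset.sum_const, Finset.card_univ,
      Fintype.card_fin, nsmul_eq_mul, Fin.sum_univ_eight]
    exact rowTotal k i.val i.isLt
  · -- columns
    rintro (j | ⟨r, j⟩)
    · simp only [Fin.sum_univ_three, hHl]
      exact colA k j.val j.isLt
    · simp only [Fin.sum_univ_three, hHr]
      exact colB k r.val j.val j.isLt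
  · -- absolute values
    have hmem : ∀ p : Fin 3 × (Fin 8 ⊕ Fin k × Fin 8),
        |H p.1 p.2| ∈ Finset.Icc (1 : ℤ) (24 * k + 24) := by
      rintro ⟨i, j | ⟨r, j⟩⟩
      · simp only [Finset.mem_Icc, hHl]
        exact memA k i.val j.val i.isLt j.isLt
      · simp only [Finset.mem_Icc, hHr]
        exact memB k r.val i.val j.val r.isLt i.isLt j.isLt
    have hinj : Function.Injective
        (fun p : Fin 3 × (Fin 8 ⊕ Fin k × Fin 8) => |H p.1 p.2|) := by
      rintro ⟨i, j | ⟨r, j⟩⟩ ⟨i', j' | ⟨s, j'⟩⟩ h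
      · have h' : |Hav k i.val j.val| = |Hav k i'.val j'.val| := by
          rw [← hHl i j, ← hHl i' j']; exact h
        obtain ⟨e1, e2⟩ := injAA k i.val i'.val j.val j'.val i.isLt i'.isLt j.isLt j'.isLt h'
        obtain rfl : i = i' := Fin.ext e1
        obtain rfl : j = j' := Fin.ext e2
        rfl
      · have h' : |Hav k i.val j.val| = |Hbv k s.val i'.val j'.val| := by
          rw [← hHl i j, ← hHr i' s j']; exact h
        exact absurd h' (fun h' =>
          injAB k s.val i.val i'.val j.val j'.val s.isLt i.isLt i'.isLt j.isLt j'.isLt h')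
      · have h' : |Hav k i'.val j'.val| = |Hbv k r.val i.val j.val| := by
          rw [← hHl i' j', ← hHr i r j]; exact h.symm
        exact absurd h' (fun h' =>
          injAB k r.val i'.val i.val j'.val j.val r.isLt i'.isLt i.isLt j'.isLt j.isLt h')
      · have h' : |Hbv k r.val i.val j.val| = |Hbv k s.val i'.val j'.val| := by
          rw [← hHr i r j, ← hHr i' s j']; exact h
        obtain ⟨e1, e2, e3⟩ := injBB k r.val s.val i.val i'.val j.val j'.val
          r.isLt s.isLt i.isLt i'.isLt j.isLt j'.isLt h'
        obtain rfl : i = i' := Fin.ext e1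
        obtain rfl : j = j' := Fin.ext e2
        obtain rfl : r = s := Fin.ext e3
        rfl
    intro v hv
    have himg : Finset.image (fun p : Fin 3 × (Fin 8 ⊕ Fin k × Fin 8) => |H p.1 p.2|)
        Finset.univ = Finset.Icc (1 : ℤ) (24 * k + 24) := by
      apply Finset.eq_of_subset_of_card_le
      · intro x hx
        obtain ⟨p, -, rfl⟩ := Finset.mem_image.mp hx
        exact hmem p
      · rw [Int.card_Icc, Finset.card_image_of_injective _ hinj, Finset.card_univ]
        simp only [Fintype.card_prod, Fintype.card_sum, Fintype.card_fin]
        omega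
    rw [← himg] at hv
    obtain ⟨p, -, hp⟩ := Finset.mem_image.mp hv
    exact ⟨p, hp, fun q hq => hinj (hq.trans hp.symm)⟩
end

section
/- For every n ≡ 0 (mod 8) with n ≥ 8, there exists a 3 × n integer Heffter array. -/
/-! Explicit construction of integer Heffter arrays H(3,8k). -/

def hsv (k j : ℤ) : ℤ :=
  if j < 4*k then 8*k - 2*j
  else if j = 4*k then 8*k - 1
  else if j = 4*k + 1 then 1
  else if j = 4*k + 2 then 4*k + 1
  else if j ≤ 6*k then 16*k + 3 - 2*j
  else 16*k + 1 - 2*j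

def hmv (k j : ℤ) : ℤ :=
  if j < 4*k then 16*k + j
  else if j = 4*k then 12*k + 1
  else if j = 4*k + 1 then 10*k
  else if j = 4*k + 2 then 8*k + 1
  else if j ≤ 6*k then 4*k - 1 + j
  else 4*k + 1 + j

def hev (k j : ℤ) : ℤ :=
  if j < 4*k then (if j % 2 = 0 then 1 else -1)
  else if j ≤ 4*k + 2 then 1
  else if j = 4*k + 3 then -1
  else if j ≤ 6*k then (if j % 2 = 0 then -1 else 1)
  else if j ≤ 8*k - 3 then (if j % 2 = 0 then 1 else -1)
  else if j = 8*k - 2 then -1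
  else 1

def hval (k i j : ℤ) : ℤ :=
  if i = 0 then hsv k j else if i = 1 then hmv k j else hsv k j + hmv k j

def hent (k i j : ℤ) : ℤ :=
  hev k j * (if i = 0 then hsv k j else if i = 1 then hmv k j else -(hsv k j + hmv k j))

-- eval lemmas
section evals
variable {k j : ℤ}

lemma hsv_A (h : j < 4*k) : hsv k j = 8*k - 2*j := by
  simp only [hsv]; split_ifs <;> omega
lemma hsv_B : hsv k (4*k) = 8*k - 1 := by
  simp only [hsv]; split_ifs <;> omega
lemma hsv_C : hsv k (4*k+1) = 1 := by
  simp only [hsv]; split_ifs <;> omega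
lemma hsv_D : hsv k (4*k+2) = 4*k+1 := by
  simp only [hsv]; split_ifs <;> omega
lemma hsv_E (h1 : 4*k+2 < j) (h2 : j ≤ 6*k) : hsv k j = 16*k + 3 - 2*j := by
  simp only [hsv]; split_ifs <;> omega
lemma hsv_F (hk : 2 ≤ k) (h1 : 6*k < j) : hsv k j = 16*k + 1 - 2*j := by
  simp only [hsv]; split_ifs <;> omega

lemma hmv_A (h : j < 4*k) : hmv k j = 16*k + j := by
  simp only [hmv]; split_ifs <;> omega
lemma hmv_B : hmv k (4*k) = 12*k + 1 := by
  simp only [hmv]; split_ifs <;> omega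
lemma hmv_C : hmv k (4*k+1) = 10*k := by
  simp only [hmv]; split_ifs <;> omega
lemma hmv_D : hmv k (4*k+2) = 8*k+1 := by
  simp only [hmv]; split_ifs <;> omega
lemma hmv_E (h1 : 4*k+2 < j) (h2 : j ≤ 6*k) : hmv k j = 4*k - 1 + j := by
  simp only [hmv]; split_ifs <;> omega
lemma hmv_F (hk : 2 ≤ k) (h1 : 6*k < j) : hmv k j = 4*k + 1 + j := by
  simp only [hmv]; split_ifs <;> omega

lemma hev_A0 (h : j < 4*k) (h2 : j % 2 = 0) : hev k j = 1 := by
  simp only [hev]; split_ifs <;> omega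
lemma hev_A1 (h : j < 4*k) (h2 : j % 2 = 1) : hev k j = -1 := by
  simp only [hev]; split_ifs <;> omega
lemma hev_BCD (h1 : 4*k ≤ j) (h2 : j ≤ 4*k+2) : hev k j = 1 := by
  simp only [hev]; split_ifs <;> omega
lemma hev_Eflip (hk : 2 ≤ k) : hev k (4*k+3) = -1 := by
  simp only [hev]; split_ifs <;> omega
lemma hev_E0 (h1 : 4*k+3 < j) (h2 : j ≤ 6*k) (h3 : j % 2 = 0) : hev k j = -1 := by
  simp only [hev]; split_ifs <;> omega
lemma hev_E1 (h1 : 4*k+3 < j) (h2 : j ≤ 6*k) (h3 : j % 2 = 1) : hev k j = 1 := by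
  simp only [hev]; split_ifs <;> omega
lemma hev_F0 (h1 : 6*k < j) (h2 : j ≤ 8*k-3) (h3 : j % 2 = 0) : hev k j = 1 := by
  simp only [hev]; split_ifs <;> omega
lemma hev_F1 (h1 : 6*k < j) (h2 : j ≤ 8*k-3) (h3 : j % 2 = 1) : hev k j = -1 := by
  simp only [hev]; split_ifs <;> omega
lemma hev_S1 (hk : 2 ≤ k) : hev k (8*k-2) = -1 := by
  simp only [hev]; split_ifs <;> omega
lemma hev_S2 (hk : 2 ≤ k) : hev k (8*k-1) = 1 := by
  simp only [hev]; split_ifs <;> omega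

end evals
lemma sum_pair (f : ℕ → ℤ) : ∀ t : ℕ,
    ∑ j ∈ Finset.range (2*t), f j = ∑ i ∈ Finset.range t, (f (2*i) + f (2*i+1))
  | 0 => by simp
  | (t+1) => by
      rw [show 2*(t+1) = 2*t+1+1 by ring, Finset.sum_range_succ, Finset.sum_range_succ,
        Finset.sum_range_succ, sum_pair f t]
      ring

lemma sum_Ico_const (a b : ℕ) (hab : a ≤ b) (g : ℕ → ℤ) (c : ℤ)
    (h : ∀ i : ℕ, a ≤ i → i < b → g i = c) :
    ∑ i ∈ Finset.Ico a b, g i = ((b : ℤ) - (a : ℤ)) * c := by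
  rw [Finset.sum_congr rfl (fun i hi => h i (Finset.mem_Ico.mp hi).1 (Finset.mem_Ico.mp hi).2),
    Finset.sum_const, Nat.card_Ico, nsmul_eq_mul, Nat.cast_sub hab]

section rowsums
variable (k : ℕ) (hk : 2 ≤ k)

include hk

lemma split_sum (g : ℕ → ℤ) :
    ∑ i ∈ Finset.range (4*k), g i
      = ∑ i ∈ Finset.Ico 0 (2*k), g i + ∑ i ∈ Finset.Ico (2*k) (2*k+1), g i
        + ∑ i ∈ Finset.Ico (2*k+1) (2*k+2), g i + ∑ i ∈ Finset.Ico (2*k+2) (3*k), g i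
        + ∑ i ∈ Finset.Ico (3*k) (3*k+1), g i + ∑ i ∈ Finset.Ico (3*k+1) (4*k-1), g i
        + ∑ i ∈ Finset.Ico (4*k-1) (4*k), g i := by
  rw [Finset.range_eq_Ico,
    ← Finset.sum_Ico_consecutive g (by omega : 0 ≤ 2*k) (by omega : 2*k ≤ 4*k),
    ← Finset.sum_Ico_consecutive g (by omega : 2*k ≤ 2*k+1) (by omega : 2*k+1 ≤ 4*k),
    ← Finset.sum_Ico_consecutive g (by omega : 2*k+1 ≤ 2*k+2) (by omega : 2*k+2 ≤ 4*k),
    ← Finset.sum_Ico_consecutive g (by omega : 2*k+2 ≤ 3*k) (by omega : 3*k ≤ 4*k),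
    ← Finset.sum_Ico_consecutive g (by omega : 3*k ≤ 3*k+1) (by omega : 3*k+1 ≤ 4*k),
    ← Finset.sum_Ico_consecutive g (by omega : 3*k+1 ≤ 4*k-1) (by omega : 4*k-1 ≤ 4*k)]
  ring

lemma S1 : ∑ j ∈ Finset.range (8*k), hev (k:ℤ) (j:ℤ) * hsv (k:ℤ) (j:ℤ) = 0 := by
  have hk' : (2:ℤ) ≤ (k:ℤ) := by exact_mod_cast hk
  rw [show 8*k = 2*(4*k) by ring,
    sum_pair (fun j : ℕ => hev (k:ℤ) (j:ℤ) * hsv (k:ℤ) (j:ℤ)), split_sum k hk]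
  rw [sum_Ico_const 0 (2*k) (by omega) _ 2 (fun i h1 h2 => by
    rw [(by omega : ((2*i : ℕ):ℤ) = 2*(i:ℤ)), (by omega : ((2*i+1 : ℕ):ℤ) = 2*(i:ℤ)+1),
      hev_A0 (by omega) (by omega), hev_A1 (by omega) (by omega),
      hsv_A (by omega), hsv_A (by omega)]
    ring)]
  rw [sum_Ico_const (2*k) (2*k+1) (by omega) _ (8*(k:ℤ)) (fun i h1 h2 => by
    rw [(by omega : ((2*i : ℕ):ℤ) = 4*(k:ℤ)), (by omega : ((2*i+1 : ℕ):ℤ) = 4*(k:ℤ)+1),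
      hev_BCD (by omega) (by omega), hev_BCD (by omega) (by omega), hsv_B, hsv_C]
    ring)]
  rw [sum_Ico_const (2*k+1) (2*k+2) (by omega) _ (-4*(k:ℤ)+4) (fun i h1 h2 => by
    rw [(by omega : ((2*i : ℕ):ℤ) = 4*(k:ℤ)+2), (by omega : ((2*i+1 : ℕ):ℤ) = 4*(k:ℤ)+3),
      hev_BCD (by omega) (by omega), hev_Eflip hk', hsv_D, hsv_E (by omega) (by omega)]
    ring)]
  rw [sum_Ico_const (2*k+2) (3*k) (by omega) _ (-2) (fun i h1 h2 => by
    rw [(by omega : ((2*i : ℕ):ℤ) = 2*(i:ℤ)), (by omega : ((2*i+1 : ℕ):ℤ) = 2*(i:ℤ)+1),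
      hev_E0 (by omega) (by omega) (by omega), hev_E1 (by omega) (by omega) (by omega),
      hsv_E (by omega) (by omega), hsv_E (by omega) (by omega)]
    ring)]
  rw [sum_Ico_const (3*k) (3*k+1) (by omega) _ (-8*(k:ℤ)-2) (fun i h1 h2 => by
    rw [(by omega : ((2*i : ℕ):ℤ) = 6*(k:ℤ)), (by omega : ((2*i+1 : ℕ):ℤ) = 6*(k:ℤ)+1),
      hev_E0 (by omega) (by omega) (by omega), hev_F1 (by omega) (by omega) (by omega),
      hsv_E (by omega) (by omega), hsv_F hk' (by omega)]
    ring)]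
  rw [sum_Ico_const (3*k+1) (4*k-1) (by omega) _ 2 (fun i h1 h2 => by
    rw [(by omega : ((2*i : ℕ):ℤ) = 2*(i:ℤ)), (by omega : ((2*i+1 : ℕ):ℤ) = 2*(i:ℤ)+1),
      hev_F0 (by omega) (by omega) (by omega), hev_F1 (by omega) (by omega) (by omega),
      hsv_F hk' (by omega), hsv_F hk' (by omega)]
    ring)]
  rw [sum_Ico_const (4*k-1) (4*k) (by omega) _ (-2) (fun i h1 h2 => by
    rw [(by omega : ((2*i : ℕ):ℤ) = 8*(k:ℤ)-2), (by omega : ((2*i+1 : ℕ):ℤ) = 8*(k:ℤ)-1),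
      hev_S1 hk', hev_S2 hk', hsv_F hk' (by omega), hsv_F hk' (by omega)]
    ring)]
  have c1 : ((2*k:ℕ):ℤ) = 2*(k:ℤ) := by omega
  have c2 : ((4*k-1:ℕ):ℤ) = 4*(k:ℤ)-1 := by omega
  have c3 : ((3*k:ℕ):ℤ) = 3*(k:ℤ) := by omega
  have c4 : ((4*k:ℕ):ℤ) = 4*(k:ℤ) := by omega
  push_cast
  omega

lemma S2 : ∑ j ∈ Finset.range (8*k), hev (k:ℤ) (j:ℤ) * hmv (k:ℤ) (j:ℤ) = 0 := by
  have hk' : (2:ℤ) ≤ (k:ℤ) := by exact_mod_cast hk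
  rw [show 8*k = 2*(4*k) by ring,
    sum_pair (fun j : ℕ => hev (k:ℤ) (j:ℤ) * hmv (k:ℤ) (j:ℤ)), split_sum k hk]
  rw [sum_Ico_const 0 (2*k) (by omega) _ (-1) (fun i h1 h2 => by
    rw [(by omega : ((2*i : ℕ):ℤ) = 2*(i:ℤ)), (by omega : ((2*i+1 : ℕ):ℤ) = 2*(i:ℤ)+1),
      hev_A0 (by omega) (by omega), hev_A1 (by omega) (by omega),
      hmv_A (by omega), hmv_A (by omega)]
    ring)]
  rw [sum_Ico_const (2*k) (2*k+1) (by omega) _ (22*(k:ℤ)+1) (fun i h1 h2 => by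
    rw [(by omega : ((2*i : ℕ):ℤ) = 4*(k:ℤ)), (by omega : ((2*i+1 : ℕ):ℤ) = 4*(k:ℤ)+1),
      hev_BCD (by omega) (by omega), hev_BCD (by omega) (by omega), hmv_B, hmv_C]
    ring)]
  rw [sum_Ico_const (2*k+1) (2*k+2) (by omega) _ (-1) (fun i h1 h2 => by
    rw [(by omega : ((2*i : ℕ):ℤ) = 4*(k:ℤ)+2), (by omega : ((2*i+1 : ℕ):ℤ) = 4*(k:ℤ)+3),
      hev_BCD (by omega) (by omega), hev_Eflip hk', hmv_D, hmv_E (by omega) (by omega)]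
    ring)]
  rw [sum_Ico_const (2*k+2) (3*k) (by omega) _ 1 (fun i h1 h2 => by
    rw [(by omega : ((2*i : ℕ):ℤ) = 2*(i:ℤ)), (by omega : ((2*i+1 : ℕ):ℤ) = 2*(i:ℤ)+1),
      hev_E0 (by omega) (by omega) (by omega), hev_E1 (by omega) (by omega) (by omega),
      hmv_E (by omega) (by omega), hmv_E (by omega) (by omega)]
    ring)]
  rw [sum_Ico_const (3*k) (3*k+1) (by omega) _ (-20*(k:ℤ)-1) (fun i h1 h2 => by
    rw [(by omega : ((2*i : ℕ):ℤ) = 6*(k:ℤ)), (by omega : ((2*i+1 : ℕ):ℤ) = 6*(k:ℤ)+1),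
      hev_E0 (by omega) (by omega) (by omega), hev_F1 (by omega) (by omega) (by omega),
      hmv_E (by omega) (by omega), hmv_F hk' (by omega)]
    ring)]
  rw [sum_Ico_const (3*k+1) (4*k-1) (by omega) _ (-1) (fun i h1 h2 => by
    rw [(by omega : ((2*i : ℕ):ℤ) = 2*(i:ℤ)), (by omega : ((2*i+1 : ℕ):ℤ) = 2*(i:ℤ)+1),
      hev_F0 (by omega) (by omega) (by omega), hev_F1 (by omega) (by omega) (by omega),
      hmv_F hk' (by omega), hmv_F hk' (by omega)]
    ring)]
  rw [sum_Ico_const (4*k-1) (4*k) (by omega) _ 1 (fun i h1 h2 => by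
    rw [(by omega : ((2*i : ℕ):ℤ) = 8*(k:ℤ)-2), (by omega : ((2*i+1 : ℕ):ℤ) = 8*(k:ℤ)-1),
      hev_S1 hk', hev_S2 hk', hmv_F hk' (by omega), hmv_F hk' (by omega)]
    ring)]
  push_cast
  omega

end rowsums
lemma hval0 (k j : ℤ) : hval k 0 j = hsv k j := by simp [hval]
lemma hval1 (k j : ℤ) : hval k 1 j = hmv k j := by norm_num [hval]
lemma hval2 (k j : ℤ) : hval k 2 j = hsv k j + hmv k j := by norm_num [hval]

set_option maxHeartbeats 2000000 in
lemma val_inj (k i j i' j' : ℤ) (hk : 2 ≤ k)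
    (hi : 0 ≤ i) (hi3 : i < 3) (hj : 0 ≤ j) (hjn : j < 8*k)
    (hi' : 0 ≤ i') (hi3' : i' < 3) (hj' : 0 ≤ j') (hjn' : j' < 8*k)
    (h : hval k i j = hval k i' j') : i = i' ∧ j = j' := by
  have hc : i = 0 ∨ i = 1 ∨ i = 2 := by omega
  have hc' : i' = 0 ∨ i' = 1 ∨ i' = 2 := by omega
  rcases hc with rfl | rfl | rfl <;> rcases hc' with rfl | rfl | rfl <;>
    simp only [hval0, hval1, hval2] at h <;>
    simp only [hsv, hmv] at h <;> split_ifs at h <;> omega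

set_option maxHeartbeats 1000000 in
lemma val_exists (k v : ℤ) (hk : 2 ≤ k) (h1 : 1 ≤ v) (h2 : v ≤ 24*k) :
    ∃ i j : ℤ, 0 ≤ i ∧ i < 3 ∧ 0 ≤ j ∧ j < 8*k ∧ hval k i j = v := by
  by_cases c1 : v = 1
  · exact ⟨0, 4*k+1, by omega, by omega, by omega, by omega, by
      rw [hval0]; simp only [hsv]; split_ifs <;> omega⟩
  by_cases c2 : v ≤ 8*k ∧ v % 2 = 0
  · refine ⟨0, 4*k - v/2, by omega, by omega, by omega, by omega, ?_⟩
    rw [hval0]; simp only [hsv]; split_ifs <;> omega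
  by_cases c3 : v = 8*k-1
  · exact ⟨0, 4*k, by omega, by omega, by omega, by omega, by
      rw [hval0]; simp only [hsv]; split_ifs <;> omega⟩
  by_cases c4 : v = 4*k+1
  · exact ⟨0, 4*k+2, by omega, by omega, by omega, by omega, by
      rw [hval0]; simp only [hsv]; split_ifs <;> omega⟩
  by_cases c5 : 3 ≤ v ∧ v ≤ 4*k-1 ∧ v % 2 = 1
  · refine ⟨0, (16*k+1-v)/2, by omega, by omega, by omega, by omega, ?_⟩
    rw [hval0]; simp only [hsv]; split_ifs <;> omega
  by_cases c6 : 4*k+3 ≤ v ∧ v ≤ 8*k-3 ∧ v % 2 = 1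
  · refine ⟨0, (16*k+3-v)/2, by omega, by omega, by omega, by omega, ?_⟩
    rw [hval0]; simp only [hsv]; split_ifs <;> omega
  by_cases c7 : v = 8*k+1
  · exact ⟨1, 4*k+2, by omega, by omega, by omega, by omega, by
      rw [hval1]; simp only [hmv]; split_ifs <;> omega⟩
  by_cases c8 : 8*k+2 ≤ v ∧ v ≤ 10*k-1
  · refine ⟨1, v - 4*k + 1, by omega, by omega, by omega, by omega, ?_⟩
    rw [hval1]; simp only [hmv]; split_ifs <;> omega
  by_cases c9 : v = 10*k
  · exact ⟨1, 4*k+1, by omega, by omega, by omega, by omega, by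
      rw [hval1]; simp only [hmv]; split_ifs <;> omega⟩
  by_cases c10 : 10*k+2 ≤ v ∧ v ≤ 12*k
  · refine ⟨1, v - 4*k - 1, by omega, by omega, by omega, by omega, ?_⟩
    rw [hval1]; simp only [hmv]; split_ifs <;> omega
  by_cases c11 : v = 12*k+1
  · exact ⟨1, 4*k, by omega, by omega, by omega, by omega, by
      rw [hval1]; simp only [hmv]; split_ifs <;> omega⟩
  by_cases c12 : 16*k ≤ v ∧ v ≤ 20*k-1
  · refine ⟨1, v - 16*k, by omega, by omega, by omega, by omega, ?_⟩
    rw [hval1]; simp only [hmv]; split_ifs <;> omega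
  by_cases c13 : v = 10*k+1
  · exact ⟨2, 4*k+1, by omega, by omega, by omega, by omega, by
      rw [hval2]; simp only [hsv, hmv]; split_ifs <;> omega⟩
  by_cases c14 : v = 12*k+2
  · exact ⟨2, 4*k+2, by omega, by omega, by omega, by omega, by
      rw [hval2]; simp only [hsv, hmv]; split_ifs <;> omega⟩
  by_cases c15 : 12*k+3 ≤ v ∧ v ≤ 16*k-1
  · refine ⟨2, 20*k+2-v, by omega, by omega, by omega, by omega, ?_⟩
    rw [hval2]; simp only [hsv, hmv]; split_ifs <;> omega
  by_cases c16 : v = 20*k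
  · exact ⟨2, 4*k, by omega, by omega, by omega, by omega, by
      rw [hval2]; simp only [hsv, hmv]; split_ifs <;> omega⟩
  refine ⟨2, 24*k-v, by omega, by omega, by omega, by omega, ?_⟩
  rw [hval2]; simp only [hsv, hmv]; split_ifs <;> omega

lemma hev_pm (k j : ℤ) : hev k j = 1 ∨ hev k j = -1 := by
  unfold hev; split_ifs <;> simp

lemma hsv_pos (k j : ℤ) (hk : 2 ≤ k) (hj : 0 ≤ j) (hjn : j < 8*k) : 0 < hsv k j := by
  unfold hsv; split_ifs <;> omega

lemma hmv_pos (k j : ℤ) (hk : 2 ≤ k) (hj : 0 ≤ j) (hjn : j < 8*k) : 0 < hmv k j := by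
  unfold hmv; split_ifs <;> omega

lemma hent_abs (k i j : ℤ) (hk : 2 ≤ k) (hj : 0 ≤ j) (hjn : j < 8*k) :
    |hent k i j| = hval k i j := by
  have he : |hev k j| = 1 := by rcases hev_pm k j with h | h <;> simp [h]
  have hs := hsv_pos k j hk hj hjn
  have hm := hmv_pos k j hk hj hjn
  unfold hent hval
  rw [abs_mul, he, one_mul]
  split_ifs
  · exact abs_of_pos hs
  · exact abs_of_pos hm
  · rw [abs_neg]; exact abs_of_pos (by omega)
/-- For every n ≡ 0 (mod 8), n ≥ 8, there exists a 3 × n integer Heffter array. -/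
theorem stmt_14 (n : ℕ) (hn : n % 8 = 0) (hn8 : 8 ≤ n) :
    ∃ A : Fin 3 → Fin n → ℤ,
      (∀ i, ∑ j, A i j = 0) ∧
      (∀ j, ∑ i, A i j = 0) ∧
      (∀ v ∈ Finset.Icc (1 : ℤ) (3 * n), ∃! p : Fin 3 × Fin n, |A p.1 p.2| = v) := by
  by_cases h8 : n = 8
  · subst h8
    refine ⟨![![1,-2,-3,4,5,-6,-7,8], ![9,-11,-20,15,17,-12,-14,16],
        ![-10,13,23,-19,-22,18,21,-24]], ?_, ?_, ?_⟩
    · decide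
    · decide
    · intro v hv
      rw [Finset.mem_Icc] at hv
      have hv' : 1 ≤ v ∧ v ≤ 24 := by push_cast at hv; omega
      obtain ⟨l, u⟩ := hv'
      interval_cases v <;> (unfold ExistsUnique; decide)
  · -- general case n = 8k, k ≥ 2
    set k : ℕ := n / 8 with hk
    have hnk : n = 8 * k := by omega
    have hk2 : 2 ≤ k := by omega
    have hK2 : (2:ℤ) ≤ (k:ℤ) := by exact_mod_cast hk2
    have hnz : (n:ℤ) = 8 * (k:ℤ) := by exact_mod_cast congrArg (Nat.cast (R := ℤ)) hnk
    refine ⟨fun i j => hent (k:ℤ) ((i:ℕ):ℤ) ((j:ℕ):ℤ), ?_, ?_, ?_⟩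
    · intro i
      rw [Fin.sum_univ_eq_sum_range (fun jn : ℕ => hent (k:ℤ) ((i:ℕ):ℤ) (jn:ℤ)) n, hnk]
      fin_cases i
      · rw [Finset.sum_congr rfl (fun j _ => by
          show hent (k:ℤ) ((0:ℕ):ℤ) (j:ℤ) = hev (k:ℤ) (j:ℤ) * hsv (k:ℤ) (j:ℤ)
          norm_num [hent])]
        exact S1 k hk2
      · rw [Finset.sum_congr rfl (fun j _ => by
          show hent (k:ℤ) ((1:ℕ):ℤ) (j:ℤ) = hev (k:ℤ) (j:ℤ) * hmv (k:ℤ) (j:ℤ)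
          norm_num [hent])]
        exact S2 k hk2
      · rw [Finset.sum_congr rfl (fun j _ => by
          show hent (k:ℤ) ((2:ℕ):ℤ) (j:ℤ)
            = (0 - hev (k:ℤ) (j:ℤ) * hsv (k:ℤ) (j:ℤ)) - hev (k:ℤ) (j:ℤ) * hmv (k:ℤ) (j:ℤ)
          norm_num [hent]; ring)]
        rw [Finset.sum_sub_distrib, Finset.sum_sub_distrib, Finset.sum_const_zero,
          S1 k hk2, S2 k hk2]
        norm_num
    · intro j
      rw [Fin.sum_univ_three]
      show hent (k:ℤ) ((0:ℕ):ℤ) _ + hent (k:ℤ) ((1:ℕ):ℤ) _ + hent (k:ℤ) ((2:ℕ):ℤ) _ = 0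
      norm_num [hent]; ring
    · intro v hv
      rw [Finset.mem_Icc] at hv
      obtain ⟨i, j, hi0, hi3, hj0, hjn, hvl⟩ :=
        val_exists (k:ℤ) v hK2 hv.1 (by omega)
      refine ⟨(⟨i.toNat, by omega⟩, ⟨j.toNat, by omega⟩), ?_, ?_⟩
      · show |hent (k:ℤ) ((i.toNat:ℕ):ℤ) ((j.toNat:ℕ):ℤ)| = v
        rw [(by omega : ((i.toNat:ℕ):ℤ) = i), (by omega : ((j.toNat:ℕ):ℤ) = j),
          hent_abs (k:ℤ) i j hK2 hj0 hjn, hvl]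
      · rintro ⟨qi, qj⟩ hq
        have hqj : ((qj:ℕ):ℤ) < 8*(k:ℤ) := by have := qj.isLt; omega
        have hqi : ((qi:ℕ):ℤ) < 3 := by have := qi.isLt; omega
        rw [hent_abs (k:ℤ) ((qi:ℕ):ℤ) ((qj:ℕ):ℤ) hK2 (by positivity) hqj] at hq
        obtain ⟨e1, e2⟩ := val_inj (k:ℤ) ((qi:ℕ):ℤ) ((qj:ℕ):ℤ) i j hK2
          (by positivity) hqi (by positivity) hqj hi0 hi3 hj0 hjn (hq.trans hvl.symm)
        have e1' : (qi:ℕ) = i.toNat := by omega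
        have e2' : (qj:ℕ) = j.toNat := by omega
        exact Prod.ext (Fin.ext e1') (Fin.ext e2')
end

section
/- Suppose A is an integer Heffter array H(t, n) (t odd, all row and column sums zero, support {1,...,tn}) and B is a shiftable integer matrix of size (m - t) × n with all row and column sums zero, balanced positive/negative entries in each row and column, and support {1, ..., (m-t)n}. Then stacking A on top of B ± tn yields an integer Heffter array H(m, n). -/
lemma stmt_15_aux {α : Type*} [Fintype α] [DecidableEq α] (N : ℕ) (f : α → ℤ)
    (hcard : Fintype.card α = N)
    (h : ∀ v ∈ Finset.Icc (1 : ℤ) (N : ℤ), ∃! a, f a = v) :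
    ∀ a, f a ∈ Finset.Icc (1 : ℤ) (N : ℤ) := by
  by_contra hc
  push_neg at hc
  obtain ⟨a0, ha0⟩ := hc
  have hsub : Finset.Icc (1 : ℤ) (N : ℤ) ⊆ Finset.image f (Finset.univ.erase a0) := by
    intro v hv
    obtain ⟨a, ha, _⟩ := h v hv
    refine Finset.mem_image.mpr ⟨a, ?_, ha⟩
    refine Finset.mem_erase.mpr ⟨?_, Finset.mem_univ _⟩
    rintro rfl; exact ha0 (ha ▸ hv)
  have h1 : (Finset.Icc (1 : ℤ) (N : ℤ)).card = N := by
    rw [Int.card_Icc]; simp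
  have h2 := (Finset.card_le_card hsub).trans (Finset.card_image_le)
  rw [h1, Finset.card_erase_of_mem (Finset.mem_univ _), Finset.card_univ, hcard] at h2
  have hN : 1 ≤ N := hcard ▸ Fintype.card_pos_iff.mpr ⟨a0⟩
  omega

/-- Stacking an integer Heffter array H(t,n) on a shifted shiftable balanced
matrix gives an integer Heffter array H(m,n). -/
theorem stmt_15 (m t n : ℕ) (ht : Odd t) (htm : t ≤ m)
    (A : Fin t → Fin n → ℤ) (B : Fin (m - t) → Fin n → ℤ)
    (hArow : ∀ i, ∑ j, A i j = 0)
    (hAcol : ∀ j, ∑ i, A i j = 0)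
    (hAsupp : ∀ v ∈ Finset.Icc (1 : ℤ) (t * n), ∃! p : Fin t × Fin n, |A p.1 p.2| = v)
    (hBrow : ∀ i, ∑ j, B i j = 0)
    (hBcol : ∀ j, ∑ i, B i j = 0)
    (hBrowbal : ∀ i, (Finset.univ.filter (fun j => 0 < B i j)).card
      = (Finset.univ.filter (fun j => B i j < 0)).card)
    (hBcolbal : ∀ j, (Finset.univ.filter (fun i => 0 < B i j)).card
      = (Finset.univ.filter (fun i => B i j < 0)).card)
    (hBsupp : ∀ v ∈ Finset.Icc (1 : ℤ) ((m - t) * n),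
      ∃! p : Fin (m - t) × Fin n, |B p.1 p.2| = v) :
    let C : Fin t ⊕ Fin (m - t) → Fin n → ℤ :=
      Sum.elim A (fun i j => if 0 < B i j then B i j + t * n else B i j - t * n)
    (∀ i : Fin t ⊕ Fin (m - t), ∑ j, C i j = 0) ∧
    (∀ j, ∑ i : Fin t ⊕ Fin (m - t), C i j = 0) ∧
    (∀ v ∈ Finset.Icc (1 : ℤ) (m * n),
      ∃! p : (Fin t ⊕ Fin (m - t)) × Fin n, |C p.1 p.2| = v) := by
  intro C
  -- recast the bounds
  have hcastB : ((m : ℤ) - t) * n = ((((m - t) * n : ℕ)) : ℤ) := by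
    push_cast [Nat.cast_sub htm]; ring
  have hcastA : ((t : ℤ)) * n = (((t * n : ℕ)) : ℤ) := by push_cast; ring
  -- every |A| and |B| entry is in range
  have hAmem : ∀ p : Fin t × Fin n, |A p.1 p.2| ∈ Finset.Icc (1 : ℤ) ((t * n : ℕ) : ℤ) := by
    apply stmt_15_aux (t * n) (fun p : Fin t × Fin n => |A p.1 p.2|) (by simp)
    intro v hv
    exact hAsupp v (by rwa [hcastA])
  have hBmem : ∀ p : Fin (m - t) × Fin n,
      |B p.1 p.2| ∈ Finset.Icc (1 : ℤ) (((m - t) * n : ℕ) : ℤ) := by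
    apply stmt_15_aux ((m - t) * n) (fun p : Fin (m - t) × Fin n => |B p.1 p.2|) (by simp)
    intro v hv
    exact hBsupp v (by rwa [hcastB])
  have hBne : ∀ i j, B i j ≠ 0 := by
    intro i j h
    have := (Finset.mem_Icc.mp (hBmem (i, j))).1
    simp [h] at this
  have hBpos : ∀ i j, ¬ 0 < B i j → B i j < 0 := by
    intro i j h
    exact lt_of_le_of_ne (not_lt.mp h) (hBne i j)
  -- absolute value formula for shifted entries
  have habs : ∀ i j, |C (Sum.inr i) j| = |B i j| + t * n := by
    intro i j
    show |if 0 < B i j then B i j + (t : ℤ) * n else B i j - t * n| = _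
    by_cases h : 0 < B i j
    · rw [if_pos h, abs_of_pos h,
        abs_of_nonneg (by positivity : (0 : ℤ) ≤ B i j + t * n)]
    · have h' := hBpos i j h
      rw [if_neg h, abs_of_neg h',
        abs_of_nonpos (by nlinarith [Int.ofNat_nonneg (t * n)] : B i j - (t : ℤ) * n ≤ 0)]
      ring
  -- bounds on shifted entries
  have hAbd : ∀ p : Fin t × Fin n, 1 ≤ |A p.1 p.2| ∧ |A p.1 p.2| ≤ (t : ℤ) * n := by
    intro p
    have := Finset.mem_Icc.mp (hAmem p)
    rw [hcastA]; exact this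
  have hBbd : ∀ p : Fin (m - t) × Fin n,
      1 ≤ |B p.1 p.2| ∧ |B p.1 p.2| ≤ ((m : ℤ) - t) * n := by
    intro p
    have := Finset.mem_Icc.mp (hBmem p)
    rw [hcastB]; exact this
  -- the row-shift sum vanishes
  have hshift : ∀ (i : Fin (m - t)),
      ∑ j, (if 0 < B i j then B i j + (t : ℤ) * n else B i j - t * n)
        = ∑ j, B i j + ((Finset.univ.filter (fun j => 0 < B i j)).card
            - (Finset.univ.filter (fun j => ¬ 0 < B i j)).card) * (t * n) := by
    intro i
    have : ∀ j, (if 0 < B i j then B i j + (t : ℤ) * n else B i j - t * n)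
        = B i j + (if 0 < B i j then ((t : ℤ) * n) else -(t * n)) := by
      intro j; split <;> ring
    rw [Finset.sum_congr rfl (fun j _ => this j), Finset.sum_add_distrib,
      Finset.sum_ite, Finset.sum_const, Finset.sum_const]
    push_cast
    ring
  have hfilt : ∀ i : Fin (m - t),
      Finset.univ.filter (fun j => ¬ 0 < B i j) = Finset.univ.filter (fun j => B i j < 0) := by
    intro i
    apply Finset.filter_congr
    intro j _
    constructor
    · exact fun h => by simpa using hBpos i j (by simpa using h)
    · intro h; simpa using not_lt.mpr (by simpa using h : B i j < 0).le
  refine ⟨?_, ?_, ?_⟩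
  · rintro (i | i)
    · simpa [C] using hArow i
    · show ∑ j, (if 0 < B i j then B i j + (t : ℤ) * n else B i j - t * n) = 0
      rw [hshift i, hBrow i, hfilt i, hBrowbal i]
      ring
  · intro j
    show ∑ i : Fin t ⊕ Fin (m - t), C i j = 0
    rw [Fintype.sum_sum_type]
    have h1 : ∑ i, C (Sum.inl i) j = 0 := by simpa [C] using hAcol j
    have h2 : ∑ i, C (Sum.inr i) j = 0 := by
      show ∑ i, (if 0 < B i j then B i j + (t : ℤ) * n else B i j - t * n) = 0
      have : ∀ i, (if 0 < B i j then B i j + (t : ℤ) * n else B i j - t * n)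
          = B i j + (if 0 < B i j then ((t : ℤ) * n) else -(t * n)) := by
        intro i; split <;> ring
      rw [Finset.sum_congr rfl (fun i _ => this i), Finset.sum_add_distrib, hBcol j,
        Finset.sum_ite, Finset.sum_const, Finset.sum_const]
      have hfiltc : Finset.univ.filter (fun i => ¬ 0 < B i j)
          = Finset.univ.filter (fun i => B i j < 0) := by
        apply Finset.filter_congr
        intro i _
        constructor
        · exact fun h => by simpa using hBpos i j (by simpa using h)
        · intro h; simpa using not_lt.mpr (by simpa using h : B i j < 0).le
      rw [hfiltc, hBcolbal j]
      push_cast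
      ring
    rw [h1, h2, add_zero]
  · intro v hv
    obtain ⟨hv1, hv2⟩ := Finset.mem_Icc.mp hv
    by_cases hvt : v ≤ (t : ℤ) * n
    · -- v lives in the A part
      obtain ⟨p, hp, hpu⟩ := hAsupp v (Finset.mem_Icc.mpr ⟨hv1, hvt⟩)
      refine ⟨(Sum.inl p.1, p.2), hp, ?_⟩
      rintro ⟨(q | q), j⟩ hq
      · have := hpu (q, j) hq
        subst this
        rfl
      · exfalso
        simp only [C] at hq
        have h1 := habs q j
        have h2 := (hBbd (q, j)).1
        simp only [C] at h1
        rw [h1] at hq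
        linarith
    · -- v lives in the shifted B part
      push_neg at hvt
      have hmem : v - (t : ℤ) * n ∈ Finset.Icc (1 : ℤ) ((m - t) * n) := by
        refine Finset.mem_Icc.mpr ⟨by omega, ?_⟩
        have : ((m : ℤ) - t) * n = (m : ℤ) * n - t * n := by ring
        rw [this]
        omega
      obtain ⟨p, hp, hpu⟩ := hBsupp (v - (t : ℤ) * n) hmem
      refine ⟨(Sum.inr p.1, p.2), ?_, ?_⟩
      · show |C (Sum.inr p.1) p.2| = v
        rw [habs p.1 p.2, hp]
        ring
      · rintro ⟨(q | q), j⟩ hq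
        · exfalso
          have h2 := (hAbd (q, j)).2
          simp only [C, Sum.elim_inl] at hq
          linarith
        · have hq' : |B q j| = v - (t : ℤ) * n := by
            have h1 := habs q j
            simp only [C] at hq h1
            rw [h1] at hq
            omega
          have := hpu (q, j) hq'
          subst this
          rfl
end
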